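/- arXiv:1803.00773 — 3 statements merged into one kernel-verified Lean document; each statement's English description precedes it below -/
import Mathlib

section
/- Among weighted ℓ¹-norms on ℝ³, the ℓ¹-norm is the unique best regularizer for 1-sparse vectors in the non-uniform sense: for every w ∈ ℝ³ with 0 < w_i ≤ 1 = max_i w_i and w ≠ (1,1,1), one has max_{i∈{1,2,3}} vol(T_{‖·‖_w}(e_i) ∩ S(1)) > max_{i∈{1,2,3}} vol(T_{‖·‖₁}(e_i) ∩ S(1)); equivalently, the supremum over nonzero x ∈ Σ₁ of vol(T_{‖·‖_w}(x) ∩ S(1)) is uniquely minimized over this class of weights at w = (1,1,1). -/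
/-
At a vertex `eᵢ` with `wᵢ = 1` the ℓ¹ descent cone is contained in the weighted one, since
`‖·‖_w ≤ ‖·‖₁` with equality at `eᵢ`. If moreover `wⱼ < 1`, the weighted cone contains an open
patch of directions (near `eⱼ`, tilted towards `-eᵢ`) that the ℓ¹ cone misses; projecting that
patch of the sphere onto the two coordinates other than `i` exhibits an open planar set, so it has
positive 2-dimensional Hausdorff measure. The sphere has finite measure (it is covered by the radial
projections of the faces of a cube, which are `C¹` images of squares), so the weighted volume at
`eᵢ` is strictly larger. All ℓ¹ volumes coincide by permutation symmetry of the coordinates.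
-/

open scoped BigOperators ENNReal RealInnerProductSpace
open MeasureTheory Metric

noncomputable section

/-- The set of `k`-sparse vectors of `ℝⁿ`. -/
def sparseVecs (n k : ℕ) : Set (EuclideanSpace ℝ (Fin n)) :=
  {x | ∃ s : Finset (Fin n), s.card ≤ k ∧ ∀ i ∉ s, x i = 0}

/-- Descent set (collection of descent vectors) of `R` at `x`. -/
def descentCone {n : ℕ} (R : EuclideanSpace ℝ (Fin n) → ℝ) (x : EuclideanSpace ℝ (Fin n)) :
    Set (EuclideanSpace ℝ (Fin n)) := {z | R (x + z) ≤ R x}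

/-- Descent vectors of `R` at the model set `S`. -/
def descentConeSet {n : ℕ} (R : EuclideanSpace ℝ (Fin n) → ℝ)
    (S : Set (EuclideanSpace ℝ (Fin n))) : Set (EuclideanSpace ℝ (Fin n)) :=
  ⋃ x ∈ S, descentCone R x

/-- Weighted ℓ¹-norm `‖z‖_w = ∑ i, w i * |z i|`. -/
def wNorm {n : ℕ} (w : Fin n → ℝ) (z : EuclideanSpace ℝ (Fin n)) : ℝ := ∑ i, w i * |z i|

/-- Restriction of a vector to a set of coordinates (`z_S`). -/
def coordRestrict {n : ℕ} (z : EuclideanSpace ℝ (Fin n)) (S : Finset (Fin n)) :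
    EuclideanSpace ℝ (Fin n) := WithLp.toLp 2 (fun i => if i ∈ S then z i else 0)

lemma wNorm_single {n : ℕ} (w : Fin n → ℝ) (i : Fin n) (a : ℝ) :
    wNorm w (EuclideanSpace.single i a) = w i * |a| := by
  rw [wNorm, Finset.sum_eq_single i (fun m _ hm => by simp [hm]) (by simp)]
  simp

lemma continuous_wNorm {n : ℕ} (w : Fin n → ℝ) : Continuous (wNorm w) := by
  unfold wNorm; fun_prop

lemma wNorm_piLpCongrLeft {n : ℕ} (w : Fin n → ℝ) (σ : Equiv.Perm (Fin n))
    (z : EuclideanSpace ℝ (Fin n)) :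
    wNorm w (LinearIsometryEquiv.piLpCongrLeft 2 ℝ ℝ σ z) = wNorm (w ∘ σ) z := by
  simp only [wNorm, LinearIsometryEquiv.piLpCongrLeft_apply, Equiv.piCongrLeft'_apply]
  exact Fintype.sum_equiv σ.symm _ _ fun m => by simp

lemma isClosed_descentCone {n : ℕ} {R : EuclideanSpace ℝ (Fin n) → ℝ} (hR : Continuous R)
    (x : EuclideanSpace ℝ (Fin n)) : IsClosed (descentCone R x) :=
  isClosed_le (hR.comp (continuous_const.add continuous_id)) continuous_const

lemma descentCone_wNorm_single_subset {n : ℕ} {v w : Fin n → ℝ} (hvw : ∀ m, v m ≤ w m)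
    {i : Fin n} (hi : v i = w i) (a : ℝ) :
    descentCone (wNorm w) (EuclideanSpace.single i a) ⊆
      descentCone (wNorm v) (EuclideanSpace.single i a) := fun z hz =>
  calc wNorm v (EuclideanSpace.single i a + z)
      ≤ wNorm w (EuclideanSpace.single i a + z) :=
        Finset.sum_le_sum fun m _ => mul_le_mul_of_nonneg_right (hvw m) (abs_nonneg _)
    _ ≤ wNorm w (EuclideanSpace.single i a) := hz
    _ = wNorm v (EuclideanSpace.single i a) := by rw [wNorm_single, wNorm_single, hi]

lemma LinearIsometryEquiv.image_descentCone {n : ℕ}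
    (Φ : EuclideanSpace ℝ (Fin n) ≃ₗᵢ[ℝ] EuclideanSpace ℝ (Fin n))
    {R R' : EuclideanSpace ℝ (Fin n) → ℝ} (hR : ∀ z, R' (Φ z) = R z)
    (x : EuclideanSpace ℝ (Fin n)) : Φ '' descentCone R x = descentCone R' (Φ x) := by
  ext y
  obtain ⟨z, rfl⟩ := Φ.surjective y
  rw [Φ.injective.mem_set_image]
  simp only [descentCone, Set.mem_ofPred_eq, ← map_add, hR]

lemma hausdorffMeasure_descentCone_wNorm_comp_perm {n : ℕ} (d r : ℝ) (w : Fin n → ℝ)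
    (σ : Equiv.Perm (Fin n)) (i : Fin n) (a : ℝ) :
    μH[d] (descentCone (wNorm (w ∘ σ)) (EuclideanSpace.single i a) ∩ sphere 0 r) =
      μH[d] (descentCone (wNorm w) (EuclideanSpace.single (σ i) a) ∩ sphere 0 r) := by
  set Φ := LinearIsometryEquiv.piLpCongrLeft 2 ℝ ℝ σ
  have hΦ : Φ (EuclideanSpace.single i a) = EuclideanSpace.single (σ i) a :=
    LinearIsometryEquiv.piLpCongrLeft_single σ i a
  rw [← Φ.isometry.hausdorffMeasure_image (Or.inr Φ.surjective), Set.image_inter Φ.injective,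
    Φ.image_descentCone (wNorm_piLpCongrLeft w σ), Φ.image_sphere, hΦ, map_zero]

lemma hausdorffMeasure_descentCone_l1_single_eq {n : ℕ} (d r : ℝ) (i j : Fin n) (a : ℝ) :
    μH[d] (descentCone (wNorm fun _ => 1) (EuclideanSpace.single i a) ∩ sphere 0 r) =
      μH[d] (descentCone (wNorm fun _ => 1) (EuclideanSpace.single j a) ∩ sphere 0 r) := by
  simpa [Function.comp_def] using
    hausdorffMeasure_descentCone_wNorm_comp_perm d r (fun _ => (1 : ℝ)) (Equiv.swap i j) i a

theorem ContDiffOn.hausdorffMeasure_image_lt_top {E F : Type*}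
    [NormedAddCommGroup E] [NormedSpace ℝ E] [MeasurableSpace E] [BorelSpace E]
    [NormedAddCommGroup F] [NormedSpace ℝ F] [MeasurableSpace F] [BorelSpace F]
    {f : E → F} {s : Set E} (hf : ContDiffOn ℝ 1 f s) (hs : Convex ℝ s) (hs' : IsCompact s)
    {d : ℝ} (hd : 0 ≤ d) (h : μH[d] s < ∞) : μH[d] (f '' s) < ∞ := by
  obtain ⟨K, hK⟩ := hf.exists_lipschitzOnWith one_ne_zero hs hs'
  exact (hK.hausdorffMeasure_image_le hd).trans_lt
    (ENNReal.mul_lt_top (ENNReal.rpow_lt_top_of_nonneg hd ENNReal.coe_ne_top) h)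

/-- For `s = ±1` and `p ∈ [-1, 1]ⁿ`, the radial projection of a point of a face of the cube
`[-1, 1]ⁿ⁺¹`; finitely many such `C¹` patches cover the sphere. -/
def radialCubeFace {n : ℕ} (i : Fin (n + 1)) (s : ℝ) (p : Fin n → ℝ) :
    EuclideanSpace ℝ (Fin (n + 1)) :=
  let v : EuclideanSpace ℝ (Fin (n + 1)) := WithLp.toLp 2 (Fin.insertNth i s p)
  ‖v‖⁻¹ • v

lemma contDiff_radialCubeFace {n : ℕ} (i : Fin (n + 1)) {s : ℝ} (hs : s ≠ 0) :
    ContDiff ℝ 1 (radialCubeFace i s) := by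
  set v : (Fin n → ℝ) → EuclideanSpace ℝ (Fin (n + 1)) :=
    fun p => WithLp.toLp 2 (Fin.insertNth i s p)
  have hv : ContDiff ℝ 1 v := contDiff_euclidean.2 fun m => by
    rcases i.eq_self_or_eq_succAbove m with rfl | ⟨k, rfl⟩
    · simpa [v] using contDiff_const
    · simpa [v] using contDiff_apply ℝ ℝ k
  have hv0 : ∀ p, v p ≠ 0 := fun p h => hs (by simpa [v] using congrArg (· i) h)
  exact contDiff_iff_contDiffAt.2 fun p =>
    (((contDiffAt_norm ℝ (hv0 p)).comp p hv.contDiffAt).inv (norm_ne_zero_iff.2 (hv0 p))).smul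
      hv.contDiffAt

lemma sphere_subset_iUnion_radialCubeFace (n : ℕ) :
    sphere (0 : EuclideanSpace ℝ (Fin (n + 1))) 1 ⊆
      ⋃ i, ⋃ s ∈ ({-1, 1} : Finset ℝ), radialCubeFace i s '' Set.Icc (-1) 1 := by
  intro z hz
  rw [mem_sphere_zero_iff_norm] at hz
  obtain ⟨i, -, hi⟩ := Finset.exists_max_image Finset.univ (fun m => |z m|) Finset.univ_nonempty
  have hc : 0 < |z i| := by
    by_contra! h
    have : z = 0 := by
      ext m; simpa using (hi m (Finset.mem_univ _)).trans h
    simp [this] at hz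
  set c := |z i|
  have hzc :
      WithLp.toLp 2 (Fin.insertNth i (z i / c) fun k => z (i.succAbove k) / c) = c⁻¹ • z := by
    ext m
    rcases i.eq_self_or_eq_succAbove m with rfl | ⟨k, rfl⟩ <;> simp [div_eq_inv_mul]
  refine Set.mem_iUnion.2
    ⟨i, Set.mem_iUnion₂.2 ⟨z i / c, ?_, fun k => z (i.succAbove k) / c, ?_, ?_⟩⟩
  · have hz0 : z i ≠ 0 := abs_pos.1 hc
    rcases abs_choice (z i) with h | h <;> simp [c, h, hz0]
  · have hp : ∀ k, |z (i.succAbove k) / c| ≤ 1 := fun k => by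
      rw [abs_div, abs_abs, div_le_one hc]; exact hi _ (Finset.mem_univ _)
    exact ⟨fun k => (abs_le.1 (hp k)).1, fun k => (abs_le.1 (hp k)).2⟩
  · rw [radialCubeFace, hzc, norm_smul, hz, mul_one, norm_inv, Real.norm_eq_abs, abs_abs,
      inv_inv, smul_inv_smul₀ hc.ne']

lemma hausdorffMeasure_sphere_lt_top (n : ℕ) :
    μH[n] (sphere (0 : EuclideanSpace ℝ (Fin (n + 1))) 1) < ∞ := by
  have hIcc : μH[n] (Set.Icc (-1 : Fin n → ℝ) 1) < ∞ := by
    have hμ : (μH[n] : Measure (Fin n → ℝ)) = volume := by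
      simpa using hausdorffMeasure_pi_real (ι := Fin n)
    exact hμ ▸ isCompact_Icc.measure_lt_top
  refine (measure_mono (sphere_subset_iUnion_radialCubeFace n)).trans_lt ?_
  refine (measure_iUnion_fintype_le _ _).trans_lt (ENNReal.sum_lt_top.2 fun i _ => ?_)
  refine (measure_biUnion_finset_le _ _).trans_lt (ENNReal.sum_lt_top.2 fun s hs => ?_)
  have hs0 : s ≠ 0 := by rintro rfl; simp at hs
  exact (contDiff_radialCubeFace i hs0).contDiffOn.hausdorffMeasure_image_lt_top
    (convex_Icc _ _) isCompact_Icc n.cast_nonneg hIcc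

def lowerHemisphereChart (p : Fin 2 → ℝ) : EuclideanSpace ℝ (Fin 3) :=
  !₂[-√(1 - p 0 ^ 2 - p 1 ^ 2), p 0, p 1]

lemma lowerHemisphereChart_mem_sphere {p : Fin 2 → ℝ} (hp : p 0 ^ 2 + p 1 ^ 2 ≤ 1) :
    lowerHemisphereChart p ∈ sphere 0 1 := by
  rw [mem_sphere_zero_iff_norm, EuclideanSpace.norm_eq, Real.sqrt_eq_one, Fin.sum_univ_three]
  simp [lowerHemisphereChart, Real.sq_sqrt (by linarith : 0 ≤ 1 - p 0 ^ 2 - p 1 ^ 2)]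
  ring

lemma wNorm_single_add_lowerHemisphereChart (v : Fin 3 → ℝ) (p : Fin 2 → ℝ) :
    wNorm v (EuclideanSpace.single 0 1 + lowerHemisphereChart p) =
      v 0 * (1 - √(1 - p 0 ^ 2 - p 1 ^ 2)) + v 1 * |p 0| + v 2 * |p 1| := by
  have hs : √(1 - p 0 ^ 2 - p 1 ^ 2) ≤ 1 := Real.sqrt_le_one.2 (by nlinarith)
  simp [wNorm, Fin.sum_univ_three, lowerHemisphereChart, ← sub_eq_add_neg, abs_of_nonneg, hs]

lemma lowerHemisphereChart_mem_descentCone_diff {w : Fin 3 → ℝ} (hw0 : w 0 = 1) (hw2 : w 2 ≤ 1)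
    {p : Fin 2 → ℝ} (hp₁ : (w 1 * |p 0| + |p 1|) ^ 2 + p 0 ^ 2 + p 1 ^ 2 ≤ 1)
    (hp₂ : 1 < 2 * p 0 ^ 2) :
    lowerHemisphereChart p ∈ descentCone (wNorm w) (EuclideanSpace.single 0 1) \
      descentCone (wNorm fun _ => 1) (EuclideanSpace.single 0 1) := by
  set s := √(1 - p 0 ^ 2 - p 1 ^ 2)
  have hw : w 1 * |p 0| + w 2 * |p 1| ≤ s := calc
    _ ≤ w 1 * |p 0| + |p 1| := by gcongr; exact mul_le_of_le_one_left (abs_nonneg _) hw2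
    _ ≤ s := (le_abs_self _).trans (Real.abs_le_sqrt (by linarith))
  have hp0 : 0 < |p 0| := abs_pos.2 fun h => by norm_num [h] at hp₂
  have hl1 : s < |p 0| + |p 1| := calc
    s < |p 0| := (Real.sqrt_lt' hp0).2 (by rw [sq_abs]; nlinarith)
    _ ≤ |p 0| + |p 1| := le_add_of_nonneg_right (abs_nonneg _)
  simp only [descentCone, Set.mem_sdiff, Set.mem_ofPred_eq, wNorm_single,
    wNorm_single_add_lowerHemisphereChart, hw0, one_mul, abs_one, not_le]
  exact ⟨by linarith, by linarith⟩

lemma hausdorffMeasure_descentCone_diff_pos {w : Fin 3 → ℝ} (hw0 : w 0 = 1) (hw1 : |w 1| < 1)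
    (hw2 : w 2 ≤ 1) :
    0 < μH[2] ((descentCone (wNorm w) (EuclideanSpace.single 0 1) \
      descentCone (wNorm fun _ => 1) (EuclideanSpace.single 0 1)) ∩ sphere 0 1) := by
  set T := (descentCone (wNorm w) (EuclideanSpace.single 0 1) \
      descentCone (wNorm fun _ => 1) (EuclideanSpace.single 0 1)) ∩ sphere 0 1
  set U : Set (Fin 2 → ℝ) :=
    {p | (w 1 * |p 0| + |p 1|) ^ 2 + p 0 ^ 2 + p 1 ^ 2 < 1} ∩ {p | 1 < 2 * p 0 ^ 2}
  set π : EuclideanSpace ℝ (Fin 3) → Fin 2 → ℝ := fun z => ![z 1, z 2]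
  have hπ : LipschitzWith 1 π := LipschitzWith.of_dist_le_mul fun z z' => by
    rw [NNReal.coe_one, one_mul, dist_pi_le_iff dist_nonneg]
    intro t; fin_cases t <;> exact PiLp.dist_apply_le _ _ _
  have hUT : U ⊆ π '' T := by
    rintro p ⟨hp₁, hp₂⟩
    rw [Set.mem_ofPred_eq] at hp₁ hp₂
    refine ⟨lowerHemisphereChart p,
      ⟨lowerHemisphereChart_mem_descentCone_diff hw0 hw2 hp₁.le hp₂,
        lowerHemisphereChart_mem_sphere ?_⟩, ?_⟩
    · nlinarith [sq_nonneg (w 1 * |p 0| + |p 1|)]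
    · ext t; fin_cases t <;> rfl
  have hU_open : IsOpen U :=
    (isOpen_lt (by fun_prop) continuous_const).inter (isOpen_lt continuous_const (by fun_prop))
  -- `(a, 0) ∈ U` iff `1 / 2 < a ^ 2 < 1 / (1 + w 1 ^ 2)`; `2 / (3 + w 1 ^ 2)` lies in between.
  have hU_nonempty : U.Nonempty := by
    have hu : w 1 ^ 2 < 1 := by rwa [sq_lt_one_iff_abs_lt_one]
    have ha : √(2 / (3 + w 1 ^ 2)) ^ 2 = 2 / (3 + w 1 ^ 2) := Real.sq_sqrt (by positivity)
    refine ⟨![√(2 / (3 + w 1 ^ 2)), 0], ?_, ?_⟩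
    · simp only [Set.mem_ofPred_eq, Matrix.cons_val_zero, Matrix.cons_val_one, abs_zero,
        add_zero, mul_pow, sq_abs, ha]
      field_simp
      linarith
    · simp only [Set.mem_ofPred_eq, Matrix.cons_val_zero, ha]
      field_simp
      linarith
  have hU_pos : 0 < μH[2] U := by
    have hμ : (μH[2] : Measure (Fin 2 → ℝ)) = volume := by
      simpa using hausdorffMeasure_pi_real (ι := Fin 2)
    exact hμ ▸ hU_open.measure_pos volume hU_nonempty
  simpa using (hU_pos.trans_le (measure_mono hUT)).trans_le
    (hπ.hausdorffMeasure_image_le zero_le_two T)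

lemma hausdorffMeasure_descentCone_l1_lt {w : Fin 3 → ℝ} (hle : ∀ m, w m ≤ 1) (hw0 : w 0 = 1)
    (hw1 : |w 1| < 1) :
    μH[2] (descentCone (wNorm fun _ => 1) (EuclideanSpace.single (0 : Fin 3) 1) ∩ sphere 0 1) <
      μH[2] (descentCone (wNorm w) (EuclideanSpace.single 0 1) ∩ sphere 0 1) := by
  set A := descentCone (wNorm fun _ => 1) (EuclideanSpace.single (0 : Fin 3) 1) ∩ sphere 0 1
  set B := descentCone (wNorm w) (EuclideanSpace.single 0 1) ∩ sphere 0 1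
  have hAB : A ⊆ B := Set.inter_subset_inter_left _ (descentCone_wNorm_single_subset hle hw0 1)
  have hA_meas : MeasurableSet A :=
    ((isClosed_descentCone (continuous_wNorm _) _).inter isClosed_sphere).measurableSet
  have hA_fin : μH[2] A ≠ ∞ := by
    refine ((measure_mono Set.inter_subset_right).trans_lt ?_).ne
    exact_mod_cast hausdorffMeasure_sphere_lt_top 2
  have hBA : 0 < μH[2] (B \ A) := by
    refine (hausdorffMeasure_descentCone_diff_pos hw0 hw1 (hle 2)).trans_le (measure_mono ?_)
    rintro z ⟨⟨hB, hA⟩, hS⟩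
    exact ⟨⟨hB, hS⟩, fun h => hA h.1⟩
  calc μH[2] A < μH[2] A + μH[2] (B \ A) := ENNReal.lt_add_right hA_fin hBA.ne'
    _ = μH[2] B := by rw [measure_add_sdiff hA_meas.nullMeasurableSet, Set.union_eq_right.2 hAB]

/-- among weighted ℓ¹-norms on ℝ³ the ℓ¹-norm is the unique best regularizer for
1-sparse vectors in the non-uniform sense. -/
theorem l1_unique_best_nonuniform_3d
    (w : Fin 3 → ℝ) (hpos : ∀ i, 0 < w i) (hle : ∀ i, w i ≤ 1)
    (hmax : ∃ i, w i = 1) (hne : w ≠ fun _ => 1) :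
    (⨆ i : Fin 3, Measure.hausdorffMeasure 2
        (descentCone (wNorm (fun _ => (1 : ℝ))) (EuclideanSpace.single i (1 : ℝ)) ∩
          sphere (0 : EuclideanSpace ℝ (Fin 3)) 1))
      < ⨆ i : Fin 3, Measure.hausdorffMeasure 2
        (descentCone (wNorm w) (EuclideanSpace.single i (1 : ℝ)) ∩
          sphere (0 : EuclideanSpace ℝ (Fin 3)) 1) := by
  obtain ⟨i₀, hi₀⟩ := hmax
  obtain ⟨j, hj⟩ : ∃ j, w j ≠ 1 := by
    by_contra! h
    exact hne (funext h)
  have hj' : |w j| < 1 := abs_lt.2 ⟨by linarith [hpos j], (hle j).lt_of_ne hj⟩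
  have hperm : ∀ i j : Fin 3, i ≠ j → ∃ σ : Equiv.Perm (Fin 3), σ 0 = i ∧ σ 1 = j := by
    decide
  obtain ⟨σ, rfl, rfl⟩ := hperm i₀ j fun h => hj (h ▸ hi₀)
  calc _ ≤ μH[2] (descentCone (wNorm fun _ => 1) (EuclideanSpace.single 0 1) ∩ sphere 0 1) :=
        iSup_le fun i => (hausdorffMeasure_descentCone_l1_single_eq 2 1 i 0 1).le
    _ < μH[2] (descentCone (wNorm (w ∘ σ)) (EuclideanSpace.single 0 1) ∩ sphere 0 1) :=
        hausdorffMeasure_descentCone_l1_lt (fun m => hle (σ m)) hi₀ hj'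
    _ = μH[2] (descentCone (wNorm w) (EuclideanSpace.single (σ 0) 1) ∩ sphere 0 1) :=
        hausdorffMeasure_descentCone_wNorm_comp_perm 2 1 w σ 0 1
    _ ≤ _ := le_iSup (fun i => μH[2] (descentCone (wNorm w) (EuclideanSpace.single i 1) ∩
        sphere (0 : EuclideanSpace ℝ (Fin 3)) 1)) (σ 0)

end
end

section
/- Let k ≥ 1 and n ≥ 2k, let Σ_k be the set of k-sparse vectors of ℝⁿ, and let R be a norm on ℝⁿ. Then, as an identity in [1,∞], A_Σ^{RIP,nec}(R) = 1 / (1 − inf_{z ∈ T_R(Σ_k)∖{0}} sup_{x ∈ Σ_{2k}, ‖x‖₂ = 1} ⟨x,z⟩²/‖z‖₂²). In particular, for every nonzero z ∈ ℝⁿ, inf{⟨x,z⟩²/‖z‖₂² : x ∈ Σ_{2k}, ‖x‖₂ = 1} = 0 and γ(I − Π_z) = 1/(1 − sup{⟨x,z⟩²/‖z‖₂² : x ∈ Σ_{2k}, ‖x‖₂ = 1}). -/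
open scoped BigOperators ENNReal RealInnerProductSpace
open MeasureTheory Metric

noncomputable section

/-- Restricted conditioning `γ(M)` of a map `M` on the secant set `Σ_{2k}`, valued in `[0,∞]`. -/
def gammaRC (n k : ℕ) (M : EuclideanSpace ℝ (Fin n) → EuclideanSpace ℝ (Fin n)) : ℝ≥0∞ :=
  (⨆ x ∈ {x : EuclideanSpace ℝ (Fin n) | x ∈ sparseVecs n (2 * k) ∧ ‖x‖ = 1},
      ENNReal.ofReal (‖M x‖ ^ 2)) /
  (⨅ x ∈ {x : EuclideanSpace ℝ (Fin n) | x ∈ sparseVecs n (2 * k) ∧ ‖x‖ = 1},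
      ENNReal.ofReal (‖M x‖ ^ 2))

/-- `A_Σ^{RIP,nec}(R)`. -/
def Anec (n k : ℕ) (R : EuclideanSpace ℝ (Fin n) → ℝ) : ℝ≥0∞ :=
  ⨅ z ∈ descentConeSet R (sparseVecs n k) \ {0},
    gammaRC n k (fun x =>
      x - (Submodule.orthogonalProjection (Submodule.span ℝ {z}) x : EuclideanSpace ℝ (Fin n)))

/-!
For a unit vector `x`, Pythagoras gives `‖(I - Π_z) x‖² = 1 - ⟪x, z⟫² / ‖z‖²`. Since `n ≥ 2`,
the `2`-sparse vector `z j • eᵢ - z i • eⱼ` (or `eᵢ` when it vanishes) is orthogonal to `z`, so the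
supremum of `‖(I - Π_z) x‖²` over unit `2k`-sparse vectors is `1`, while its infimum is
`1 - sup ⟪x, z⟫² / ‖z‖²`. Finally `t ↦ 1 / (1 - t)` is monotone on `[0, ∞]` and turns infima into
infima.
-/

theorem sparseVecs_mono {n k l : ℕ} (hkl : k ≤ l) : sparseVecs n k ⊆ sparseVecs n l :=
  fun _ ⟨s, hs, hx⟩ => ⟨s, hs.trans hkl, hx⟩

theorem smul_mem_sparseVecs {n k : ℕ} (c : ℝ) {x : EuclideanSpace ℝ (Fin n)}
    (hx : x ∈ sparseVecs n k) : c • x ∈ sparseVecs n k := by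
  obtain ⟨s, hs, hx⟩ := hx
  exact ⟨s, hs, fun i hi => by simp [hx i hi]⟩

theorem exists_unit_mem_sparseVecs_two_inner_eq_zero {n : ℕ} {i j : Fin n} (hij : i ≠ j)
    (z : EuclideanSpace ℝ (Fin n)) :
    ∃ x ∈ sparseVecs n 2, ‖x‖ = 1 ∧ ⟪x, z⟫ = 0 := by
  set v := z j • EuclideanSpace.single i (1 : ℝ) - z i • EuclideanSpace.single j 1
  have hv : v ∈ sparseVecs n 2 := by
    refine ⟨{i, j}, Finset.card_le_two, fun l hl => ?_⟩
    simp only [Finset.mem_insert, Finset.mem_singleton, not_or] at hl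
    simp [v, hl.1, hl.2]
  have hvz : ⟪v, z⟫ = 0 := by
    simp only [v, inner_sub_left, real_inner_smul_left, EuclideanSpace.inner_single_left,
      map_one, one_mul]
    ring
  by_cases hv0 : v = 0
  · have hzi : z i = 0 := by
      simpa [v, PiLp.single_apply, hij.symm] using congrArg (· j) hv0
    refine ⟨EuclideanSpace.single i 1, ⟨{i}, by simp, fun l hl => ?_⟩, by simp,
      by simp [EuclideanSpace.inner_single_left, hzi]⟩
    simp [Ne.symm (Finset.mem_singleton.not.mp hl)]
  · refine ⟨‖v‖⁻¹ • v, smul_mem_sparseVecs _ hv, norm_smul_inv_norm hv0, ?_⟩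
    rw [real_inner_smul_left, hvz, mul_zero]

theorem exists_unit_mem_sparseVecs_inner_eq_zero {n k : ℕ} (hk : 1 ≤ k) (hn : 2 * k ≤ n)
    (z : EuclideanSpace ℝ (Fin n)) :
    ∃ x ∈ sparseVecs n (2 * k), ‖x‖ = 1 ∧ ⟪x, z⟫ = 0 := by
  obtain ⟨x, hx, hx1, hxz⟩ := exists_unit_mem_sparseVecs_two_inner_eq_zero
    (i := ⟨0, by omega⟩) (j := ⟨1, by omega⟩) (by simp) z
  exact ⟨x, sparseVecs_mono (by omega) hx, hx1, hxz⟩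

theorem norm_sub_starProjection_span_singleton_sq {E : Type*} [NormedAddCommGroup E]
    [InnerProductSpace ℝ E] (z x : E) :
    ‖x - (ℝ ∙ z).starProjection x‖ ^ 2 = ‖x‖ ^ 2 - ⟪x, z⟫ ^ 2 / ‖z‖ ^ 2 := by
  rcases eq_or_ne z 0 with rfl | hz
  · simp
  have hz' : ‖z‖ ≠ 0 := norm_ne_zero_iff.mpr hz
  rw [Submodule.starProjection_singleton, RCLike.ofReal_real_eq_id, id, norm_sub_sq_real,
    real_inner_smul_right, norm_smul, mul_pow, Real.norm_eq_abs, sq_abs, real_inner_comm z x]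
  field_simp
  ring

theorem ENNReal.iSup_one_sub_div_iInf_one_sub {α : Type*} {s : Set α} {f : α → ℝ≥0∞}
    (h : ∃ a ∈ s, f a = 0) :
    (⨆ a ∈ s, (1 - f a)) / (⨅ a ∈ s, (1 - f a)) = 1 / (1 - ⨆ a ∈ s, f a) := by
  obtain ⟨a₀, ha₀, hfa₀⟩ := h
  have hsup : ⨆ a ∈ s, (1 - f a) = 1 :=
    le_antisymm (iSup₂_le fun _ _ => tsub_le_self)
      (le_iSup₂_of_le (f := fun a _ => 1 - f a) a₀ ha₀ (by simp [hfa₀]))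
  have : Nonempty s := ⟨⟨a₀, ha₀⟩⟩
  rw [hsup, iInf_subtype', iSup_subtype', ENNReal.sub_iSup ENNReal.one_ne_top]

theorem ENNReal.iInf_one_div_one_sub {α : Type*} (s : Set α) (f : α → ℝ≥0∞) :
    ⨅ a ∈ s, 1 / (1 - f a) = 1 / (1 - ⨅ a ∈ s, f a) := by
  simp_rw [one_div, ENNReal.sub_iInf, ENNReal.inv_iSup]

theorem sInf_inner_sq_div_norm_sq_eq_zero {n k : ℕ} (hk : 1 ≤ k) (hn : 2 * k ≤ n)
    (z : EuclideanSpace ℝ (Fin n)) :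
    sInf {r : ℝ | ∃ x ∈ sparseVecs n (2 * k), ‖x‖ = 1 ∧ r = ⟪x, z⟫ ^ 2 / ‖z‖ ^ 2} = 0 := by
  obtain ⟨x₀, hx₀, hx₀1, hx₀z⟩ := exists_unit_mem_sparseVecs_inner_eq_zero hk hn z
  refine IsLeast.csInf_eq ⟨⟨x₀, hx₀, hx₀1, by simp [hx₀z]⟩, ?_⟩
  rintro r ⟨x, -, -, rfl⟩
  positivity

theorem gammaRC_sub_starProjection_span_singleton {n k : ℕ} (hk : 1 ≤ k) (hn : 2 * k ≤ n)
    (z : EuclideanSpace ℝ (Fin n)) :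
    gammaRC n k (fun x => x - (ℝ ∙ z).starProjection x)
      = 1 / (1 - ⨆ x ∈ {x : EuclideanSpace ℝ (Fin n) | x ∈ sparseVecs n (2 * k) ∧ ‖x‖ = 1},
          ENNReal.ofReal (⟪x, z⟫ ^ 2 / ‖z‖ ^ 2)) := by
  have hunit : ∀ x ∈ {x : EuclideanSpace ℝ (Fin n) | x ∈ sparseVecs n (2 * k) ∧ ‖x‖ = 1},
      ENNReal.ofReal (‖x - (ℝ ∙ z).starProjection x‖ ^ 2)
        = 1 - ENNReal.ofReal (⟪x, z⟫ ^ 2 / ‖z‖ ^ 2) := by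
    rintro x ⟨-, hx1⟩
    rw [norm_sub_starProjection_span_singleton_sq, hx1, one_pow,
      ENNReal.ofReal_sub _ (by positivity), ENNReal.ofReal_one]
  obtain ⟨x₀, hx₀, hx₀1, hx₀z⟩ := exists_unit_mem_sparseVecs_inner_eq_zero hk hn z
  rw [gammaRC, biSup_congr hunit, biInf_congr hunit]
  exact ENNReal.iSup_one_sub_div_iInf_one_sub ⟨x₀, ⟨hx₀, hx₀1⟩, by simp [hx₀z]⟩

theorem Anec_eq_inv_one_sub_inf_sup_general
    (n k : ℕ) (hk : 1 ≤ k) (hn : 2 * k ≤ n)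
    (R : EuclideanSpace ℝ (Fin n) → ℝ) :
    Anec n k R
      = 1 / (1 - ⨅ z ∈ descentConeSet R (sparseVecs n k) \ {0},
          ⨆ x ∈ {x : EuclideanSpace ℝ (Fin n) | x ∈ sparseVecs n (2 * k) ∧ ‖x‖ = 1},
            ENNReal.ofReal (⟪x, z⟫ ^ 2 / ‖z‖ ^ 2))
    ∧ ∀ z : EuclideanSpace ℝ (Fin n), z ≠ 0 →
        sInf {r : ℝ | ∃ x ∈ sparseVecs n (2 * k), ‖x‖ = 1 ∧ r = ⟪x, z⟫ ^ 2 / ‖z‖ ^ 2} = 0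
        ∧ gammaRC n k (fun x =>
              x - (Submodule.orthogonalProjection (Submodule.span ℝ {z}) x : EuclideanSpace ℝ (Fin n)))
          = 1 / (1 - ⨆ x ∈ {x : EuclideanSpace ℝ (Fin n) | x ∈ sparseVecs n (2 * k) ∧ ‖x‖ = 1},
              ENNReal.ofReal (⟪x, z⟫ ^ 2 / ‖z‖ ^ 2)) := by
  refine ⟨?_, fun z _ => ⟨sInf_inner_sq_div_norm_sq_eq_zero hk hn z,
    gammaRC_sub_starProjection_span_singleton hk hn z⟩⟩
  rw [Anec, ← ENNReal.iInf_one_div_one_sub]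
  exact biInf_congr fun z _ => gammaRC_sub_starProjection_span_singleton hk hn z

/-- characterization of `A_Σ^{RIP,nec}(R)` (Lemma 2 of the paper), as an identity
in `[1,∞] ⊆ [0,∞]`. -/
theorem Anec_eq_inv_one_sub_inf_sup
    (n k : ℕ) (hk : 1 ≤ k) (hn : 2 * k ≤ n)
    (R : EuclideanSpace ℝ (Fin n) → ℝ)
    (hRhom : ∀ (c : ℝ) (x : EuclideanSpace ℝ (Fin n)), R (c • x) = |c| * R x)
    (hRadd : ∀ x y, R (x + y) ≤ R x + R y)
    (hRdef : ∀ x, R x = 0 → x = 0) :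
    Anec n k R
      = 1 / (1 - ⨅ z ∈ descentConeSet R (sparseVecs n k) \ {0},
          ⨆ x ∈ {x : EuclideanSpace ℝ (Fin n) | x ∈ sparseVecs n (2 * k) ∧ ‖x‖ = 1},
            ENNReal.ofReal (⟪x, z⟫ ^ 2 / ‖z‖ ^ 2))
    ∧ ∀ z : EuclideanSpace ℝ (Fin n), z ≠ 0 →
        sInf {r : ℝ | ∃ x ∈ sparseVecs n (2 * k), ‖x‖ = 1 ∧ r = ⟪x, z⟫ ^ 2 / ‖z‖ ^ 2} = 0
        ∧ gammaRC n k (fun x =>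
              x - (Submodule.orthogonalProjection (Submodule.span ℝ {z}) x : EuclideanSpace ℝ (Fin n)))
          = 1 / (1 - ⨆ x ∈ {x : EuclideanSpace ℝ (Fin n) | x ∈ sparseVecs n (2 * k) ∧ ‖x‖ = 1},
              ENNReal.ofReal (⟪x, z⟫ ^ 2 / ‖z‖ ^ 2)) :=
  Anec_eq_inv_one_sub_inf_sup_general n k hk hn R

end
end

section
/- Let k ≥ 1, n ≥ 2k, Σ_k the set of k-sparse vectors of ℝⁿ, w a weight vector with w_i > 0 and max_i w_i = 1, R = ‖·‖_w, and H₀ a set of k indices carrying k largest weights of w. Then B_Σ(R) = sup_{z ∈ T_R(Σ_k)∖{0}} ‖z_{T₂ᶜ}‖₂²/‖z_{T₂}‖₂² = sup{ ‖z_{T₂ᶜ}‖₂²/‖z_{T₂}‖₂² : z ∈ ℝⁿ, z ≠ 0, ‖z_{H₀}‖_w ≥ ‖z_{H₀ᶜ}‖_w }. -/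
/-!
A vector `z` with `‖z_{H₀ᶜ}‖_w ≤ ‖z_{H₀}‖_w` is a descent vector at the `k`-sparse point `-z_{H₀}`.
Conversely, if `‖x + z‖_w ≤ ‖x‖_w` with `x` supported on a set `S` of `k` indices, the triangle
inequality gives `‖z_{Sᶜ}‖_w ≤ ‖z_S‖_w`. A permutation exchanging `S \ H₀` with `H₀ \ S` moves the
mass of `z` on `S` to weights at least as large and the mass off `S` to weights at most as large,
so the permuted vector satisfies the `H₀` condition; and the ratio `‖z_{T₂ᶜ}‖² / ‖z_{T₂}‖²` only
depends on the multiset of coordinates of `z`. So the two sets of ratios are equal.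
-/

open scoped BigOperators ENNReal RealInnerProductSpace
open MeasureTheory Metric

noncomputable section

open Finset Equiv LinearIsometryEquiv

section TopSums

variable {ι M : Type*} [DecidableEq ι] [AddCommMonoid M] [LinearOrder M] [IsOrderedAddMonoid M]
  {f : ι → M} {A B : Finset ι}

theorem Finset.sum_le_sum_of_card_eq_of_forall_le (hAB : #A = #B)
    (hB : ∀ i ∈ B, ∀ j ∉ B, f j ≤ f i) : ∑ i ∈ A, f i ≤ ∑ i ∈ B, f i := by
  have hcard := card_sdiff_comm hAB
  obtain ⟨c, hAc, hcB⟩ : ∃ c, (∀ i ∈ A \ B, f i ≤ c) ∧ ∀ j ∈ B \ A, c ≤ f j := by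
    rcases (B \ A).eq_empty_or_nonempty with h | h
    · rw [h, card_empty, card_eq_zero] at hcard
      exact ⟨0, by simp [hcard], by simp [h]⟩
    · refine ⟨(B \ A).inf' h f, fun i hi => le_inf' h f fun j hj => ?_, fun j hj => inf'_le f hj⟩
      exact hB j (mem_sdiff.1 hj).1 i (mem_sdiff.1 hi).2
  calc ∑ i ∈ A, f i ≤ ∑ i ∈ A ∩ B, f i + #(A \ B) • c := by
        rw [← sum_inter_add_sum_sdiff A B]
        gcongr
        exact sum_le_card_nsmul _ _ _ hAc
    _ = ∑ i ∈ B ∩ A, f i + #(B \ A) • c := by rw [inter_comm, hcard]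
    _ ≤ ∑ i ∈ B, f i := by
        rw [← sum_inter_add_sum_sdiff B A]
        gcongr
        exact card_nsmul_le_sum _ _ _ hcB

theorem Finset.sum_eq_sum_of_card_eq_of_forall_le (hAB : #A = #B)
    (hA : ∀ i ∈ A, ∀ j ∉ A, f j ≤ f i) (hB : ∀ i ∈ B, ∀ j ∉ B, f j ≤ f i) :
    ∑ i ∈ A, f i = ∑ i ∈ B, f i :=
  le_antisymm (sum_le_sum_of_card_eq_of_forall_le hAB hB)
    (sum_le_sum_of_card_eq_of_forall_le hAB.symm hA)

end TopSums

section SignedWeight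

variable {α : Type*} [DecidableEq α]

def signedWeight (w : α → ℝ) (S : Finset α) (i : α) : ℝ := if i ∈ S then w i else -w i

/-- Swapping some `a ∈ S \ H` with some `b ∈ H \ S` lowers no signed weight and shrinks `S \ H`. -/
theorem exists_perm_signedWeight_le {w : α → ℝ} {H : Finset α}
    (hH : ∀ i ∈ H, ∀ j ∉ H, w j ≤ w i) {S : Finset α} (hSH : #S = #H) :
    ∃ τ : Perm α, ∀ i, signedWeight w S i ≤ signedWeight w H (τ i) := by
  induction hm : #(S \ H) generalizing S with
  | zero =>
    have hS : S = H := eq_of_subset_of_card_le (sdiff_eq_empty_iff_subset.1 (card_eq_zero.1 hm))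
      hSH.ge
    exact ⟨1, fun i => by simp [hS]⟩
  | succ m ih =>
    obtain ⟨a, ha⟩ : (S \ H).Nonempty := card_pos.1 (by omega)
    obtain ⟨b, hb⟩ : (H \ S).Nonempty := card_pos.1 (by rw [← card_sdiff_comm hSH]; omega)
    rw [mem_sdiff] at ha hb
    have hab : a ≠ b := by rintro rfl; exact ha.2 hb.1
    set S' := insert b (S.erase a)
    have hS' : #S' = #H := by
      rw [card_insert_of_notMem (by simp [hb.2]), card_erase_of_mem ha.1, ← hSH]
      have := card_pos.2 ⟨a, ha.1⟩
      omega
    have hm' : #(S' \ H) = m := by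
      have : S' \ H = (S \ H).erase a := by
        ext i
        simp only [S', mem_sdiff, mem_insert, mem_erase]
        constructor
        · rintro ⟨rfl | h, hi⟩ <;> tauto
        · tauto
      rw [this, card_erase_of_mem (mem_sdiff.2 ha), hm, Nat.add_sub_cancel]
    obtain ⟨τ, hτ⟩ := ih hS' hm'
    refine ⟨τ * swap a b, fun i => le_trans ?_ (hτ (swap a b i))⟩
    unfold signedWeight
    rcases eq_or_ne i a with rfl | hia
    · simp [S', ha.1, hH b hb.1 i ha.2]
    rcases eq_or_ne i b with rfl | hib
    · simp [S', hb.2, hab, hH i hb.1 a ha.2]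
    simp [S', swap_apply_of_ne_of_ne hia hib, hia, hib]

end SignedWeight

theorem EuclideanSpace.piLpCongrLeft_apply_apply {ι : Type*} [Fintype ι] (σ : Perm ι)
    (z : EuclideanSpace ℝ ι) (i : ι) : piLpCongrLeft 2 ℝ ℝ σ z i = z (σ.symm i) := by
  simp [piLpCongrLeft_apply, Equiv.piCongrLeft']

section WeightedL1

variable {n : ℕ}

theorem normSq_coordRestrict (z : EuclideanSpace ℝ (Fin n)) (S : Finset (Fin n)) :
    ‖coordRestrict z S‖ ^ 2 = ∑ i ∈ S, z i ^ 2 := by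
  simp [EuclideanSpace.norm_sq_eq, coordRestrict, apply_ite, sum_ite_mem]

theorem wNorm_coordRestrict (w : Fin n → ℝ) (z : EuclideanSpace ℝ (Fin n)) (S : Finset (Fin n)) :
    wNorm w (coordRestrict z S) = ∑ i ∈ S, w i * |z i| := by
  simp [wNorm, coordRestrict, apply_ite, sum_ite_mem]

theorem wNorm_neg (w : Fin n → ℝ) (z : EuclideanSpace ℝ (Fin n)) : wNorm w (-z) = wNorm w z := by
  simp [wNorm]

theorem wNorm_coordRestrict_compl_le_iff {w : Fin n → ℝ} {z : EuclideanSpace ℝ (Fin n)}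
    {S : Finset (Fin n)} :
    wNorm w (coordRestrict z Sᶜ) ≤ wNorm w (coordRestrict z S) ↔
      0 ≤ ∑ i, signedWeight w S i * |z i| := by
  simp only [wNorm_coordRestrict, signedWeight, ite_mul, neg_mul, sum_ite, sum_neg_distrib,
    filter_mem_eq_inter, univ_inter, ← compl_eq_univ_sdiff, filter_not]
  constructor <;> intro h <;> linarith

theorem sum_signedWeight_mul_abs_nonneg_of_descent {w : Fin n → ℝ} (hw : ∀ i, 0 ≤ w i)
    {x z : EuclideanSpace ℝ (Fin n)} {S : Finset (Fin n)} (hx : ∀ i ∉ S, x i = 0)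
    (hdesc : wNorm w (x + z) ≤ wNorm w x) : 0 ≤ ∑ i, signedWeight w S i * |z i| :=
  calc 0 ≤ wNorm w x - wNorm w (x + z) := sub_nonneg.2 hdesc
    _ = ∑ i, w i * (|x i| - |x i + z i|) := by simp [wNorm, mul_sub, sum_sub_distrib]
    _ ≤ ∑ i, signedWeight w S i * |z i| := sum_le_sum fun i _ => by
        unfold signedWeight
        split_ifs with hi
        · have : |x i| ≤ |x i + z i| + |z i| := by simpa using abs_sub (x i + z i) (z i)
          exact mul_le_mul_of_nonneg_left (by linarith) (hw i)
        · simp [hx i hi]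

end WeightedL1

section DescentCone

variable {n k : ℕ} {w : Fin n → ℝ}

theorem mem_descentConeSet_sparseVecs_of_wNorm_le {H : Finset (Fin n)} (hH : #H ≤ k)
    {z : EuclideanSpace ℝ (Fin n)}
    (h : wNorm w (coordRestrict z Hᶜ) ≤ wNorm w (coordRestrict z H)) :
    z ∈ descentConeSet (wNorm w) (sparseVecs n k) := by
  refine Set.mem_iUnion₂.2
    ⟨-coordRestrict z H, ⟨H, hH, fun i hi => by simp [coordRestrict, hi]⟩, ?_⟩
  have : -coordRestrict z H + z = coordRestrict z Hᶜ := by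
    ext i
    by_cases hi : i ∈ H <;> simp [coordRestrict, hi]
  change wNorm w (-coordRestrict z H + z) ≤ wNorm w (-coordRestrict z H)
  rwa [this, wNorm_neg]

theorem exists_perm_wNorm_coordRestrict_compl_le (hw : ∀ i, 0 ≤ w i) {H : Finset (Fin n)}
    (hH : ∀ i ∈ H, ∀ j ∉ H, w j ≤ w i) {z : EuclideanSpace ℝ (Fin n)}
    (hz : z ∈ descentConeSet (wNorm w) (sparseVecs n #H)) :
    ∃ σ : Perm (Fin n),
      wNorm w (coordRestrict (piLpCongrLeft 2 ℝ ℝ σ z) Hᶜ) ≤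
        wNorm w (coordRestrict (piLpCongrLeft 2 ℝ ℝ σ z) H) := by
  obtain ⟨x, ⟨S₀, hS₀H, hS₀⟩, hdesc⟩ := Set.mem_iUnion₂.1 hz
  obtain ⟨S, hS₀S, hSH⟩ := exists_superset_card_eq hS₀H (card_le_univ H)
  obtain ⟨τ, hτ⟩ := exists_perm_signedWeight_le hH hSH
  have hS := sum_signedWeight_mul_abs_nonneg_of_descent hw
    (fun i hi => hS₀ i fun h => hi (hS₀S h)) hdesc
  refine ⟨τ, wNorm_coordRestrict_compl_le_iff.2 ?_⟩
  calc 0 ≤ ∑ i, signedWeight w S i * |z i| := hS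
    _ ≤ ∑ i, signedWeight w H (τ i) * |z i| :=
        sum_le_sum fun i _ => mul_le_mul_of_nonneg_right (hτ i) (abs_nonneg _)
    _ = ∑ j, signedWeight w H j * |piLpCongrLeft 2 ℝ ℝ τ z j| := by
        rw [← Equiv.sum_comp τ fun j =>
          signedWeight w H j * |piLpCongrLeft 2 ℝ ℝ τ z j|]
        simp [EuclideanSpace.piLpCongrLeft_apply_apply]

end DescentCone

section TailRatio

variable {n m : ℕ} {T₂ : EuclideanSpace ℝ (Fin n) → Finset (Fin n)}

theorem sum_sq_top_piLpCongrLeft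
    (hT₂ : ∀ z, #(T₂ z) = m ∧ ∀ i ∈ T₂ z, ∀ j ∉ T₂ z, |z j| ≤ |z i|)
    (σ : Perm (Fin n)) (z : EuclideanSpace ℝ (Fin n)) :
    ∑ i ∈ T₂ (piLpCongrLeft 2 ℝ ℝ σ z),
        piLpCongrLeft 2 ℝ ℝ σ z i ^ 2 = ∑ i ∈ T₂ z, z i ^ 2 := by
  set z' := piLpCongrLeft 2 ℝ ℝ σ z
  have hz' : ∀ i, z' i = z (σ.symm i) := EuclideanSpace.piLpCongrLeft_apply_apply σ z
  have htop : ∀ i ∈ (T₂ z').map σ.symm.toEmbedding, ∀ j ∉ (T₂ z').map σ.symm.toEmbedding,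
      z j ^ 2 ≤ z i ^ 2 := by
    intro i hi j hj
    rw [mem_map_equiv, symm_symm] at hi hj
    simpa [hz'] using sq_le_sq.2 ((hT₂ z').2 _ hi _ hj)
  calc ∑ i ∈ T₂ z', z' i ^ 2 = ∑ i ∈ (T₂ z').map σ.symm.toEmbedding, z i ^ 2 := by simp [hz']
    _ = ∑ i ∈ T₂ z, z i ^ 2 := sum_eq_sum_of_card_eq_of_forall_le (by simp [(hT₂ _).1]) htop
        fun i hi j hj => sq_le_sq.2 ((hT₂ z).2 i hi j hj)

theorem normSq_compl_div_normSq_piLpCongrLeft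
    (hT₂ : ∀ z, #(T₂ z) = m ∧ ∀ i ∈ T₂ z, ∀ j ∉ T₂ z, |z j| ≤ |z i|)
    (σ : Perm (Fin n)) (z : EuclideanSpace ℝ (Fin n)) :
    ‖coordRestrict (piLpCongrLeft 2 ℝ ℝ σ z)
          (T₂ (piLpCongrLeft 2 ℝ ℝ σ z))ᶜ‖ ^ 2 /
        ‖coordRestrict (piLpCongrLeft 2 ℝ ℝ σ z)
          (T₂ (piLpCongrLeft 2 ℝ ℝ σ z))‖ ^ 2 =
      ‖coordRestrict z (T₂ z)ᶜ‖ ^ 2 / ‖coordRestrict z (T₂ z)‖ ^ 2 := by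
  set z' := piLpCongrLeft 2 ℝ ℝ σ z
  have htop := sum_sq_top_piLpCongrLeft hT₂ σ z
  have htotal : ‖z'‖ ^ 2 = ‖z‖ ^ 2 := by simp [z']
  rw [EuclideanSpace.norm_sq_eq, EuclideanSpace.norm_sq_eq] at htotal
  simp only [normSq_coordRestrict, Real.norm_eq_abs, sq_abs] at htotal ⊢
  rw [htop]
  congr 1
  linarith [sum_compl_add_sum (T₂ z') fun i => z' i ^ 2, sum_compl_add_sum (T₂ z) fun i => z i ^ 2]

end TailRatio

theorem Bsigma_eq_sup_over_H0_general
    (n k : ℕ)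
    (w : Fin n → ℝ) (hpos : ∀ i, 0 < w i)
    (T₂ : EuclideanSpace ℝ (Fin n) → Finset (Fin n))
    (hT₂ : ∀ z, (T₂ z).card = 2 * k ∧ ∀ i ∈ T₂ z, ∀ j ∉ T₂ z, |z j| ≤ |z i|)
    (H₀ : Finset (Fin n)) (hH₀card : H₀.card = k)
    (hH₀ : ∀ i ∈ H₀, ∀ j ∉ H₀, w j ≤ w i) :
    sSup {r : ℝ | ∃ z ∈ descentConeSet (wNorm w) (sparseVecs n k) \ {0},
        r = ‖coordRestrict z (T₂ z)ᶜ‖ ^ 2 / ‖coordRestrict z (T₂ z)‖ ^ 2}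
      = sSup {r : ℝ | ∃ z : EuclideanSpace ℝ (Fin n), z ≠ 0 ∧
          wNorm w (coordRestrict z H₀ᶜ) ≤ wNorm w (coordRestrict z H₀) ∧
          r = ‖coordRestrict z (T₂ z)ᶜ‖ ^ 2 / ‖coordRestrict z (T₂ z)‖ ^ 2} := by
  subst hH₀card
  congr 1
  ext r
  constructor
  · rintro ⟨z, ⟨hz, hz0⟩, rfl⟩
    obtain ⟨σ, hσ⟩ := exists_perm_wNorm_coordRestrict_compl_le (fun i => (hpos i).le) hH₀ hz
    exact ⟨_, by simpa using hz0, hσ, (normSq_compl_div_normSq_piLpCongrLeft hT₂ σ z).symm⟩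
  · rintro ⟨z, hz0, hdom, rfl⟩
    exact ⟨z, ⟨mem_descentConeSet_sparseVecs_of_wNorm_le le_rfl hdom, hz0⟩, rfl⟩

/-- Lemma 3 of the paper, the supremum defining `B_Σ(R)` for a weighted ℓ¹-norm
can be taken over vectors whose weighted mass on the support `H₀` of the `k` largest weights
dominates the mass outside. `T₂` picks, for each `z`, `2k` indices carrying the `2k` largest
absolute values of coordinates of `z`. -/
theorem Bsigma_eq_sup_over_H0
    (n k : ℕ) (hk : 1 ≤ k) (hn : 2 * k ≤ n)
    (w : Fin n → ℝ) (hpos : ∀ i, 0 < w i) (hle : ∀ i, w i ≤ 1) (hmax : ∃ i, w i = 1)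
    (T₂ : EuclideanSpace ℝ (Fin n) → Finset (Fin n))
    (hT₂ : ∀ z, (T₂ z).card = 2 * k ∧ ∀ i ∈ T₂ z, ∀ j ∉ T₂ z, |z j| ≤ |z i|)
    (H₀ : Finset (Fin n)) (hH₀card : H₀.card = k)
    (hH₀ : ∀ i ∈ H₀, ∀ j ∉ H₀, w j ≤ w i) :
    sSup {r : ℝ | ∃ z ∈ descentConeSet (wNorm w) (sparseVecs n k) \ {0},
        r = ‖coordRestrict z (T₂ z)ᶜ‖ ^ 2 / ‖coordRestrict z (T₂ z)‖ ^ 2}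
      = sSup {r : ℝ | ∃ z : EuclideanSpace ℝ (Fin n), z ≠ 0 ∧
          wNorm w (coordRestrict z H₀ᶜ) ≤ wNorm w (coordRestrict z H₀) ∧
          r = ‖coordRestrict z (T₂ z)ᶜ‖ ^ 2 / ‖coordRestrict z (T₂ z)‖ ^ 2} :=
  Bsigma_eq_sup_over_H0_general n k w hpos T₂ hT₂ H₀ hH₀card hH₀

end
end
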